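/- Let Ω ⊆ ℝⁿ be a nonempty closed convex set, F : ℝⁿ → ℝⁿ monotone and Lipschitz on Ω with constant L, and φ : ℝⁿ → ℝ differentiable and strongly convex with modulus ρ > 0 (so that ⟨∇φ(x) − ∇φ(y), x − y⟩ ≥ ρ‖x − y‖² for all x, y), with ∇φ Lipschitz on Ω with constant M. Fix ε > 0 and β > 0, and suppose x_ε solves VI(T_ε, Ω) where T_ε = F + ε∇φ. Then for every x ∈ Ω, ‖x − x_ε‖ ≤ ((β + L + εM)/(ερ)) · ‖y_β^ε(x) − x‖, where y_β^ε(x) = P_Ω(x − (1/β) T_ε(x)) and P_Ω is the metric projection onto Ω. -/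

import Mathlib

/-!
With `T = F + ε ∇φ`, which is `ερ`-strongly monotone and `(L + εM)`-Lipschitz on `Ω`, test the
obtuse-angle characterization of `y = P_Ω(x - T(x)/β)` at `x_ε` and the variational inequality of
`x_ε` at `y`; splitting `x - x_ε = (x - y) + (y - x_ε)` then yields
`ερ ‖x - x_ε‖² ≤ (β + L + εM) ‖y - x‖ ‖x - x_ε‖`.
-/

open Set
open scoped InnerProductSpace

theorem nonneg_of_norm_sub_le_mul_norm_sub {α γ : Type*} [NormedAddCommGroup α]
    [SeminormedAddCommGroup γ] {F : α → γ} {L : ℝ} {x y : α} (hxy : x ≠ y)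
    (hF : ‖F x - F y‖ ≤ L * ‖x - y‖) : 0 ≤ L :=
  nonneg_of_mul_nonneg_left ((norm_nonneg _).trans hF) (norm_pos_iff.2 (sub_ne_zero.2 hxy))

section InnerProductSpace

variable {E : Type*} [NormedAddCommGroup E] [InnerProductSpace ℝ E]

theorem real_inner_sub_le_zero_of_forall_norm_sub_le {K : Set E} (hK : Convex ℝ K) {u v : E}
    (hv : v ∈ K) (hmin : ∀ w ∈ K, ‖u - v‖ ≤ ‖u - w‖) : ∀ w ∈ K, ⟪u - v, w - v⟫_ℝ ≤ 0 := by
  refine (norm_eq_iInf_iff_real_inner_le_zero hK hv).mp (le_antisymm ?_ ?_)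
  · have : Nonempty K := ⟨⟨v, hv⟩⟩
    exact le_ciInf fun w => hmin w w.2
  · exact ciInf_le ⟨0, forall_mem_range.2 fun _ => norm_nonneg _⟩ (⟨v, hv⟩ : K)

theorem mul_norm_sub_sq_le_inner_add_smul {F G : E → E} {ρ ε : ℝ} {x y : E} (hε : 0 ≤ ε)
    (hF : 0 ≤ ⟪F x - F y, x - y⟫_ℝ) (hG : ρ * ‖x - y‖ ^ 2 ≤ ⟪G x - G y, x - y⟫_ℝ) :
    ε * ρ * ‖x - y‖ ^ 2 ≤ ⟪(F x + ε • G x) - (F y + ε • G y), x - y⟫_ℝ := by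
  have hsplit : (F x + ε • G x) - (F y + ε • G y) = (F x - F y) + ε • (G x - G y) := by module
  rw [hsplit, inner_add_left, real_inner_smul_left, mul_assoc]
  nlinarith [mul_le_mul_of_nonneg_left hG hε]

theorem norm_add_smul_sub_le {F G : E → E} {L M ε : ℝ} {x y : E} (hε : 0 ≤ ε)
    (hF : ‖F x - F y‖ ≤ L * ‖x - y‖) (hG : ‖G x - G y‖ ≤ M * ‖x - y‖) :
    ‖(F x + ε • G x) - (F y + ε • G y)‖ ≤ (L + ε * M) * ‖x - y‖ := by
  have hsplit : (F x + ε • G x) - (F y + ε • G y) = (F x - F y) + ε • (G x - G y) := by module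
  calc ‖(F x + ε • G x) - (F y + ε • G y)‖ ≤ ‖F x - F y‖ + ε * ‖G x - G y‖ := by
        rw [hsplit]
        exact (norm_add_le _ _).trans_eq (by rw [norm_smul, Real.norm_of_nonneg hε])
    _ ≤ L * ‖x - y‖ + ε * (M * ‖x - y‖) := by gcongr
    _ = (L + ε * M) * ‖x - y‖ := by ring

theorem inner_le_smul_inner_of_projection {T : E → E} {β : ℝ} (hβ : 0 < β) {x y z : E}
    (hproj : ⟪x - (1 / β) • T x - y, z - y⟫_ℝ ≤ 0) :
    ⟪T x, y - z⟫_ℝ ≤ β * ⟪x - y, y - z⟫_ℝ := by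
  have hexpand : ⟪x - (1 / β) • T x - y, z - y⟫_ℝ
      = (1 / β) * ⟪T x, y - z⟫_ℝ - ⟪x - y, y - z⟫_ℝ := by
    simp only [inner_sub_left, inner_sub_right, real_inner_smul_left]
    ring
  rw [hexpand, sub_nonpos, one_div, inv_mul_le_iff₀ hβ] at hproj
  exact hproj

theorem mul_norm_sub_sq_le_of_projection {T : E → E} {μ Λ β : ℝ} (hβ : 0 < β) {x xε y : E}
    (hmono : μ * ‖x - xε‖ ^ 2 ≤ ⟪T x - T xε, x - xε⟫_ℝ)
    (hlip : ‖T x - T xε‖ ≤ Λ * ‖x - xε‖)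
    (hsol : 0 ≤ ⟪T xε, y - xε⟫_ℝ)
    (hproj : ⟪x - (1 / β) • T x - y, xε - y⟫_ℝ ≤ 0) :
    μ * ‖x - xε‖ ^ 2 ≤ (β + Λ) * ‖y - x‖ * ‖x - xε‖ := by
  have hTx := inner_le_smul_inner_of_projection hβ hproj
  have hcross : ⟪x - y, y - xε⟫_ℝ ≤ ‖y - x‖ * ‖x - xε‖ := by
    have hsplit : ⟪x - y, y - xε⟫_ℝ = ⟪x - y, x - xε⟫_ℝ - ‖x - y‖ ^ 2 := by
      rw [← real_inner_self_eq_norm_sq, ← inner_sub_right]; congr 1; abel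
    have hCS := real_inner_le_norm (x - y) (x - xε)
    rw [norm_sub_rev x y] at hCS
    rw [hsplit, norm_sub_rev x y]
    nlinarith [sq_nonneg ‖y - x‖]
  have hdiff : ⟪T x - T xε, x - y⟫_ℝ ≤ Λ * ‖x - xε‖ * ‖y - x‖ := by
    calc ⟪T x - T xε, x - y⟫_ℝ ≤ ‖T x - T xε‖ * ‖y - x‖ := by
          rw [norm_sub_rev y x]; exact real_inner_le_norm _ _
      _ ≤ Λ * ‖x - xε‖ * ‖y - x‖ := by gcongr
  calc μ * ‖x - xε‖ ^ 2 ≤ ⟪T x - T xε, x - xε⟫_ℝ := hmono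
    _ = ⟪T x - T xε, x - y⟫_ℝ + ⟪T x, y - xε⟫_ℝ - ⟪T xε, y - xε⟫_ℝ := by
      simp only [inner_sub_left, inner_sub_right]; ring
    _ ≤ Λ * ‖x - xε‖ * ‖y - x‖ + β * (‖y - x‖ * ‖x - xε‖) - 0 :=
      sub_le_sub (add_le_add hdiff (hTx.trans (mul_le_mul_of_nonneg_left hcross hβ.le))) hsol
    _ = (β + Λ) * ‖y - x‖ * ‖x - xε‖ := by ring

end InnerProductSpace

theorem le_div_of_mul_sq_le_mul {μ C d : ℝ} (hμ : 0 < μ) (hC : 0 ≤ C) (hd : 0 ≤ d)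
    (h : μ * d ^ 2 ≤ C * d) : d ≤ C / μ := by
  rw [le_div_iff₀ hμ]
  rcases hd.eq_or_lt with rfl | hd
  · simpa using hC
  · nlinarith

theorem error_bound_via_projection_residual {n : ℕ}
    (Ω : Set (EuclideanSpace ℝ (Fin n)))
    (hconv : Convex ℝ Ω)
    (F : EuclideanSpace ℝ (Fin n) → EuclideanSpace ℝ (Fin n))
    (hFmono : ∀ x ∈ Ω, ∀ y ∈ Ω, 0 ≤ ⟪F x - F y, x - y⟫_ℝ)
    (L : ℝ) (hFlip : ∀ x ∈ Ω, ∀ y ∈ Ω, ‖F x - F y‖ ≤ L * ‖x - y‖)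
    (φ : EuclideanSpace ℝ (Fin n) → ℝ)
    (ρ : ℝ) (hρ : 0 < ρ)
    -- strong convexity of φ with modulus ρ (gradient strong monotonicity)
    (hφsc : ∀ x y : EuclideanSpace ℝ (Fin n),
      ρ * ‖x - y‖ ^ 2 ≤ ⟪gradient φ x - gradient φ y, x - y⟫_ℝ)
    (M : ℝ)
    (hgradlip : ∀ x ∈ Ω, ∀ y ∈ Ω, ‖gradient φ x - gradient φ y‖ ≤ M * ‖x - y‖)
    (ε β : ℝ) (hε : 0 < ε) (hβ : 0 < β)
    -- x_ε solves VI(T_ε, Ω) with T_ε = F + ε ∇φ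
    (xε : EuclideanSpace ℝ (Fin n)) (hxεΩ : xε ∈ Ω)
    (hxεsol : ∀ y ∈ Ω, 0 ≤ ⟪F xε + ε • gradient φ xε, y - xε⟫_ℝ)
    (x : EuclideanSpace ℝ (Fin n)) (hx : x ∈ Ω)
    -- y_β^ε(x) = P_Ω(x − (1/β) T_ε(x))
    (yβ : EuclideanSpace ℝ (Fin n)) (hyβΩ : yβ ∈ Ω)
    (hyβproj : ∀ z ∈ Ω,
      ‖x - (1 / β) • (F x + ε • gradient φ x) - yβ‖ ≤
        ‖x - (1 / β) • (F x + ε • gradient φ x) - z‖) :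
    ‖x - xε‖ ≤ (β + L + ε * M) / (ε * ρ) * ‖yβ - x‖ := by
  have hkey : ε * ρ * ‖x - xε‖ ^ 2 ≤ (β + (L + ε * M)) * ‖yβ - x‖ * ‖x - xε‖ :=
    mul_norm_sub_sq_le_of_projection (T := fun z => F z + ε • gradient φ z) hβ
      (mul_norm_sub_sq_le_inner_add_smul hε.le (hFmono x hx xε hxεΩ) (hφsc x xε))
      (norm_add_smul_sub_le hε.le (hFlip x hx xε hxεΩ) (hgradlip x hx xε hxεΩ))
      (hxεsol yβ hyβΩ)
      (real_inner_sub_le_zero_of_forall_norm_sub_le hconv hyβΩ hyβproj xε hxεΩ)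
  have hCnonneg : 0 ≤ (β + L + ε * M) * ‖yβ - x‖ := by
    rcases eq_or_ne yβ x with hyx | hyx
    · simp [hyx]
    have hL := nonneg_of_norm_sub_le_mul_norm_sub hyx (hFlip yβ hyβΩ x hx)
    have hM := nonneg_of_norm_sub_le_mul_norm_sub hyx (hgradlip yβ hyβΩ x hx)
    positivity
  rw [div_mul_eq_mul_div]
  exact le_div_of_mul_sq_le_mul (by positivity) hCnonneg (norm_nonneg _) (by linarith)
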